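/- arXiv:1509.00694 — 2 statements merged into one kernel-verified Lean document; each statement's English description precedes it below -/
import Mathlib

section
/- Let u, ρ : ℝ × ℝ → ℝ be smooth and 1-periodic in x, α ∈ ℝ, m := u − u_xx, and suppose (u, ρ) solves the 2CH system with vorticity: m_t = αu_x − 2u_x m − u m_x − ρρ_x and ρ_t = −uρ_x − u_x ρ. Let φ, f : ℝ × ℝ → ℝ be smooth with ∂_t φ(t,x) = u(t, φ(t,x)) and ∂_t f(t,x) = ρ(t, φ(t,x)). Then for each fixed x ∈ ℝ, the functions t ↦ (m(t,φ(t,x)) − α/2)·(∂_x φ(t,x))² + ρ(t,φ(t,x))·(∂_x f(t,x))·(∂_x φ(t,x)) and t ↦ ρ(t,φ(t,x))·(∂_x φ(t,x)) are constant in t. -/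
open Real

/-- A smooth function of two real variables (curried form). -/
def Smooth2 (f : ℝ → ℝ → ℝ) : Prop := ContDiff ℝ (⊤ : ℕ∞) (Function.uncurry f)

/-- Partial derivative in the first (time) variable. -/
noncomputable def pt (f : ℝ → ℝ → ℝ) (t x : ℝ) : ℝ := deriv (fun s => f s x) t

/-- Partial derivative in the second (space) variable. -/
noncomputable def px (f : ℝ → ℝ → ℝ) (t x : ℝ) : ℝ := deriv (f t) x

open Function in
lemma hasDerivAt_px' (g : ℝ → ℝ → ℝ) (hg : Smooth2 g) (t x : ℝ) :
    HasDerivAt (g t) (fderiv ℝ (uncurry g) (t, x) (0, 1)) x :=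
  ((hg.differentiable (by simp) (t, x)).hasFDerivAt).comp_hasDerivAt x
    ((hasDerivAt_const x t).prodMk (hasDerivAt_id x))

open Function in
lemma px_eq (g : ℝ → ℝ → ℝ) (hg : Smooth2 g) (t x : ℝ) :
    px g t x = fderiv ℝ (uncurry g) (t, x) (0, 1) := (hasDerivAt_px' g hg t x).deriv

open Function in
lemma hasDerivAt_px (g : ℝ → ℝ → ℝ) (hg : Smooth2 g) (t x : ℝ) :
    HasDerivAt (g t) (px g t x) x := by
  have h := hasDerivAt_px' g hg t x
  rwa [← px_eq g hg] at h

open Function in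
lemma pt_eq (g : ℝ → ℝ → ℝ) (hg : Smooth2 g) (t x : ℝ) :
    pt g t x = fderiv ℝ (uncurry g) (t, x) (1, 0) := by
  have h := (((hg.differentiable (by simp) (t, x)).hasFDerivAt).comp_hasDerivAt t
    ((hasDerivAt_id t).prodMk (hasDerivAt_const t x)))
  exact h.deriv

open Function in
lemma hasDerivAt_pt (g : ℝ → ℝ → ℝ) (hg : Smooth2 g) (t x : ℝ) :
    HasDerivAt (fun s => g s x) (pt g t x) t := by
  have h := ((hg.differentiable (by simp) (t, x)).hasFDerivAt).comp_hasDerivAt t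
    ((hasDerivAt_id t).prodMk (hasDerivAt_const t x))
  rwa [← pt_eq g hg] at h

open Function in
lemma smooth_px (g : ℝ → ℝ → ℝ) (hg : Smooth2 g) : Smooth2 (px g) := by
  have h : uncurry (px g) = fun p : ℝ × ℝ => fderiv ℝ (uncurry g) p (0, 1) := by
    funext p
    exact px_eq g hg p.1 p.2
  rw [Smooth2, h]
  exact (hg.fderiv_right (by simp)).clm_apply contDiff_const

open Function in
lemma smooth_pt (g : ℝ → ℝ → ℝ) (hg : Smooth2 g) : Smooth2 (pt g) := by
  have h : uncurry (pt g) = fun p : ℝ × ℝ => fderiv ℝ (uncurry g) p (1, 0) := by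
    funext p
    exact pt_eq g hg p.1 p.2
  rw [Smooth2, h]
  exact (hg.fderiv_right (by simp)).clm_apply contDiff_const

open Function in
lemma clairaut (g : ℝ → ℝ → ℝ) (hg : Smooth2 g) (t x : ℝ) :
    pt (px g) t x = px (pt g) t x := by
  rw [pt_eq (px g) (smooth_px g hg) t x, px_eq (pt g) (smooth_pt g hg) t x]
  have hDg : ContDiff ℝ (⊤ : ℕ∞) (fderiv ℝ (uncurry g)) := hg.fderiv_right (by simp)
  have key : ∀ v w : ℝ × ℝ,
      fderiv ℝ (uncurry (fun a b => fderiv ℝ (uncurry g) (a, b) w)) (t, x) v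
        = fderiv ℝ (fderiv ℝ (uncurry g)) (t, x) v w := by
    intro v w
    have h1 : (uncurry (fun a b => fderiv ℝ (uncurry g) (a, b) w))
        = fun p : ℝ × ℝ => fderiv ℝ (uncurry g) p w := by
      funext p; rfl
    rw [h1]
    have h2 : HasFDerivAt (fun p : ℝ × ℝ => fderiv ℝ (uncurry g) p w)
        ((ContinuousLinearMap.apply ℝ ℝ w).comp (fderiv ℝ (fderiv ℝ (uncurry g)) (t, x)))
        (t, x) :=
      (ContinuousLinearMap.apply ℝ ℝ w).hasFDerivAt.comp (t, x)
        ((hDg.differentiable (by simp) (t, x)).hasFDerivAt)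
    rw [h2.fderiv]
    rfl
  have hpx : (uncurry (px g))
      = uncurry (fun a b => fderiv ℝ (uncurry g) (a, b) ((0:ℝ), (1:ℝ))) := by
    funext p
    exact px_eq g hg p.1 p.2
  have hpt : (uncurry (pt g))
      = uncurry (fun a b => fderiv ℝ (uncurry g) (a, b) ((1:ℝ), (0:ℝ))) := by
    funext p
    exact pt_eq g hg p.1 p.2
  rw [hpx, hpt, key, key]
  exact (hg.contDiffAt.isSymmSndFDerivAt (by norm_num; exact WithTop.coe_le_coe.mpr (le_top : (2:ℕ∞) ≤ ⊤))) _ _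

open Function in
lemma hasDerivAt_comp2 (g : ℝ → ℝ → ℝ) (hg : Smooth2 g) {a b : ℝ → ℝ} {a' b' t : ℝ}
    (ha : HasDerivAt a a' t) (hb : HasDerivAt b b' t) :
    HasDerivAt (fun s => g (a s) (b s))
      (pt g (a t) (b t) * a' + px g (a t) (b t) * b') t := by
  have hD : HasFDerivAt (uncurry g) (fderiv ℝ (uncurry g) (a t, b t)) (a t, b t) :=
    (hg.differentiable (by simp) _).hasFDerivAt
  have h := hD.comp_hasDerivAt t (ha.prodMk hb)
  have hv : ((a', b') : ℝ × ℝ) = a' • ((1:ℝ), (0:ℝ)) + b' • ((0:ℝ), (1:ℝ)) := by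
    simp [Prod.ext_iff]
  have he : fderiv ℝ (uncurry g) (a t, b t) (a', b')
      = pt g (a t) (b t) * a' + px g (a t) (b t) * b' := by
    rw [hv, map_add, map_smul, map_smul, pt_eq g hg, px_eq g hg, smul_eq_mul, smul_eq_mul]
    ring
  rw [he] at h
  exact h

/-- Conservation of the first two components of the body momentum
`μ₀ = Ad*_{(φ,f,s)} μ` along solutions of the 2CH system with vorticity. -/
theorem stmt3 (u ρ φ f : ℝ → ℝ → ℝ)
    (hu : Smooth2 u) (hρ : Smooth2 ρ) (hφ : Smooth2 φ) (hf : Smooth2 f)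
    (huper : ∀ t x, u t (x + 1) = u t x) (hρper : ∀ t x, ρ t (x + 1) = ρ t x)
    (α : ℝ) (m : ℝ → ℝ → ℝ) (hm : ∀ t x, m t x = u t x - px (px u) t x)
    (heq1 : ∀ t x, pt m t x
      = α * px u t x - 2 * px u t x * m t x - u t x * px m t x - ρ t x * px ρ t x)
    (heq2 : ∀ t x, pt ρ t x = -(u t x * px ρ t x) - px u t x * ρ t x)
    (hφt : ∀ t x, pt φ t x = u t (φ t x))
    (hft : ∀ t x, pt f t x = ρ t (φ t x)) :
    ∀ x t₁ t₂,
      ((m t₁ (φ t₁ x) - α / 2) * (px φ t₁ x) ^ 2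
          + ρ t₁ (φ t₁ x) * px f t₁ x * px φ t₁ x
        = (m t₂ (φ t₂ x) - α / 2) * (px φ t₂ x) ^ 2
          + ρ t₂ (φ t₂ x) * px f t₂ x * px φ t₂ x)
      ∧ ρ t₁ (φ t₁ x) * px φ t₁ x = ρ t₂ (φ t₂ x) * px φ t₂ x := by
  have hmS : Smooth2 m := by
    have h2 : Smooth2 (px (px u)) := smooth_px _ (smooth_px u hu)
    have he : Function.uncurry m
        = fun p : ℝ × ℝ => Function.uncurry u p - Function.uncurry (px (px u)) p := by
      funext p
      exact hm p.1 p.2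
    rw [Smooth2, he]
    exact hu.sub h2
  intro x t₁ t₂
  -- derivative of the flow
  have hP : ∀ t, HasDerivAt (fun s => φ s x) (u t (φ t x)) t := by
    intro t
    have h := hasDerivAt_pt φ hφ t x
    rwa [hφt] at h
  -- derivative of px φ along time (Clairaut + chain rule)
  have hP' : ∀ t, HasDerivAt (fun s => px φ s x) (px u t (φ t x) * px φ t x) t := by
    intro t
    have h := hasDerivAt_pt (px φ) (smooth_px φ hφ) t x
    have e1 : pt (px φ) t x = px (pt φ) t x := clairaut φ hφ t x
    have e2 : px (pt φ) t x = px u t (φ t x) * px φ t x := by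
      have hc : HasDerivAt (fun y => u t (φ t y)) (px u t (φ t x) * px φ t x) x :=
        (hasDerivAt_px u hu t (φ t x)).comp x (hasDerivAt_px φ hφ t x)
      have hsl : (pt φ) t = fun y => u t (φ t y) := funext fun y => hφt t y
      show deriv ((pt φ) t) x = _
      rw [hsl]
      exact hc.deriv
    rwa [e1, e2] at h
  have hF' : ∀ t, HasDerivAt (fun s => px f s x) (px ρ t (φ t x) * px φ t x) t := by
    intro t
    have h := hasDerivAt_pt (px f) (smooth_px f hf) t x
    have e1 : pt (px f) t x = px (pt f) t x := clairaut f hf t x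
    have e2 : px (pt f) t x = px ρ t (φ t x) * px φ t x := by
      have hc : HasDerivAt (fun y => ρ t (φ t y)) (px ρ t (φ t x) * px φ t x) x :=
        (hasDerivAt_px ρ hρ t (φ t x)).comp x (hasDerivAt_px φ hφ t x)
      have hsl : (pt f |> pt) = (pt f |> pt) := rfl
      have hsl2 : (pt f) t = fun y => ρ t (φ t y) := funext fun y => hft t y
      show deriv ((pt f) t) x = _
      rw [hsl2]
      exact hc.deriv
    rwa [e1, e2] at h
  -- derivative of m along the flow
  have hM : ∀ t, HasDerivAt (fun s => m s (φ s x))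
      (α * px u t (φ t x) - 2 * px u t (φ t x) * m t (φ t x)
        - ρ t (φ t x) * px ρ t (φ t x)) t := by
    intro t
    have h := hasDerivAt_comp2 m hmS (hasDerivAt_id t) (hP t)
    simp only [id_eq] at h
    have he : pt m t (φ t x) * 1 + px m t (φ t x) * u t (φ t x)
        = α * px u t (φ t x) - 2 * px u t (φ t x) * m t (φ t x)
          - ρ t (φ t x) * px ρ t (φ t x) := by
      rw [heq1]
      ring
    rwa [he] at h
  -- derivative of ρ along the flow
  have hR : ∀ t, HasDerivAt (fun s => ρ s (φ s x))
      (-(px u t (φ t x) * ρ t (φ t x))) t := by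
    intro t
    have h := hasDerivAt_comp2 ρ hρ (hasDerivAt_id t) (hP t)
    simp only [id_eq] at h
    have he : pt ρ t (φ t x) * 1 + px ρ t (φ t x) * u t (φ t x)
        = -(px u t (φ t x) * ρ t (φ t x)) := by
      rw [heq2]
      ring
    rwa [he] at h
  -- the two conserved quantities
  have hA : ∀ t, HasDerivAt (fun s => (m s (φ s x) - α / 2) * (px φ s x) ^ 2
      + ρ s (φ s x) * px f s x * px φ s x) 0 t := by
    intro t
    have h := (((hM t).sub_const (α / 2)).mul ((hP' t).pow 2)).add
      ((((hR t).mul (hF' t)).mul (hP' t)))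
    have he : (α * px u t (φ t x) - 2 * px u t (φ t x) * m t (φ t x)
          - ρ t (φ t x) * px ρ t (φ t x)) * px φ t x ^ 2
        + (m t (φ t x) - α / 2)
          * ((2 : ℕ) * px φ t x ^ (2 - 1) * (px u t (φ t x) * px φ t x))
        + ((-(px u t (φ t x) * ρ t (φ t x)) * px f t x
            + ρ t (φ t x) * (px ρ t (φ t x) * px φ t x)) * px φ t x
          + ρ t (φ t x) * px f t x * (px u t (φ t x) * px φ t x)) = 0 := by
      push_cast
      ring
    simp only [Pi.pow_apply, Pi.mul_apply] at h
    rwa [he] at h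
  have hB : ∀ t, HasDerivAt (fun s => ρ s (φ s x) * px φ s x) 0 t := by
    intro t
    have h := (hR t).mul (hP' t)
    have he : -(px u t (φ t x) * ρ t (φ t x)) * px φ t x
        + ρ t (φ t x) * (px u t (φ t x) * px φ t x) = 0 := by ring
    rwa [he] at h
  constructor
  · exact is_const_of_deriv_eq_zero (fun t => (hA t).differentiableAt)
      (fun t => (hA t).deriv) t₁ t₂
  · exact is_const_of_deriv_eq_zero (fun t => (hB t).differentiableAt)
      (fun t => (hB t).deriv) t₁ t₂
end

section
/- Let k₁, l₁ ∈ ℝ with k₁ ≥ 2π and l₁ ≥ 2π, let M := max{k₁, l₁}, and let α > 0. Then (1/8)(α² + 1) − (α² + 1)/(8(1 + 4π²)) − α/(4(1 + 4π²)) − α/2 − ((α + 1)/2)·(3/2 + k₁l₁/4) − k₁²l₁²/(4(1 + l₁²)) − (α/4)·k₁²l₁²/(1 + k₁²) ≥ (1/10)(α² − 5αM² − 5M²). Moreover, if α ≥ 6M², then α² − 5αM² − 5M² > 0 (since 6M² > (5/2)M² + √((25/4)M⁴ + 5M²) holds for M ≥ 2π), and hence the left-hand side above is strictly positive. -/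
/-!
Bound `1 + 4π² ≥ 40`, `k₁²l₁²/(1 + l₁²) ≤ k₁²`, `k₁²l₁²/(1 + k₁²) ≤ l₁²` and `k₁, l₁ ≤ M`. What is
left is a quadratic in `α` whose coefficients dominate those of `(α² - 5αM² - 5M²)/10` as soon as
`M² ≥ 11`, which holds since `M ≥ 2π`. The larger root of `α² - 5M²α - 5M²` is
`5M²/2 + √(25M⁴/4 + 5M²) < 6M²`, so the lower bound is positive once `α ≥ 6M²`.
-/

open Real

noncomputable def curvatureEstimate (k l α : ℝ) : ℝ :=
  (1/8) * (α ^ 2 + 1) - (α ^ 2 + 1) / (8 * (1 + 4 * π ^ 2))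
    - α / (4 * (1 + 4 * π ^ 2)) - α / 2
    - ((α + 1) / 2) * (3/2 + k * l / 4)
    - k ^ 2 * l ^ 2 / (4 * (1 + l ^ 2))
    - (α / 4) * (k ^ 2 * l ^ 2 / (1 + k ^ 2))

lemma forty_le_one_add_four_mul_pi_sq : (40 : ℝ) ≤ 1 + 4 * π ^ 2 := by
  nlinarith [pi_gt_d2]

lemma mul_div_one_add_le {x y : ℝ} (hx : 0 ≤ x) (hy : 0 ≤ y) : x * y / (1 + y) ≤ x := by
  rw [div_le_iff₀ (by positivity)]
  nlinarith

lemma le_curvatureEstimate {k l α M : ℝ} (hα : 0 ≤ α) (hk : 0 ≤ k) (hl : 0 ≤ l)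
    (hkM : k ≤ M) (hlM : l ≤ M) (hM : 11 ≤ M ^ 2) :
    (1/10) * (α ^ 2 - 5 * α * M ^ 2 - 5 * M ^ 2) ≤ curvatureEstimate k l α := by
  have hc := forty_le_one_add_four_mul_pi_sq
  have hπ₁ : (α ^ 2 + 1) / (8 * (1 + 4 * π ^ 2)) ≤ (α ^ 2 + 1) / 320 :=
    div_le_div_of_nonneg_left (by positivity) (by norm_num) (by linarith)
  have hπ₂ : α / (4 * (1 + 4 * π ^ 2)) ≤ α / 160 :=
    div_le_div_of_nonneg_left hα (by norm_num) (by linarith)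
  have hkl : k * l ≤ M ^ 2 := by
    rw [sq]; exact mul_le_mul hkM hlM hl (hk.trans hkM)
  have hk₂ : k ^ 2 ≤ M ^ 2 := pow_le_pow_left₀ hk hkM 2
  have hl₂ : l ^ 2 ≤ M ^ 2 := pow_le_pow_left₀ hl hlM 2
  have hfrac₁ : k ^ 2 * l ^ 2 / (4 * (1 + l ^ 2)) ≤ M ^ 2 / 4 := by
    rw [div_mul_eq_div_div_swap]
    gcongr
    exact (mul_div_one_add_le (sq_nonneg k) (sq_nonneg l)).trans hk₂
  have hfrac₂ : (α / 4) * (k ^ 2 * l ^ 2 / (1 + k ^ 2)) ≤ (α / 4) * M ^ 2 := by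
    gcongr
    rw [mul_comm]
    exact (mul_div_one_add_le (sq_nonneg l) (sq_nonneg k)).trans hl₂
  unfold curvatureEstimate
  nlinarith [mul_nonneg hα (sub_nonneg.2 hkl), mul_nonneg hα (sub_nonneg.2 hM)]

section LargeAlpha

variable {M : ℝ} (hM : 1 ≤ M ^ 2)
include hM

lemma sqrt_lt_seven_halves_mul_sq : √((25/4) * M ^ 4 + 5 * M ^ 2) < (7/2) * M ^ 2 := by
  rw [sqrt_lt' (by positivity)]
  nlinarith

lemma quadratic_pos_of_six_mul_sq_le {α : ℝ} (hα : 6 * M ^ 2 ≤ α) :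
    0 < α ^ 2 - 5 * α * M ^ 2 - 5 * M ^ 2 := by
  nlinarith [mul_le_mul hα hα (by positivity) (by linarith)]

end LargeAlpha

/-- The final real-variable lower estimate for the non-normalized sectional
curvature `S(U,V)` of the 2CH system with vorticity in the cosine
directions. -/
theorem stmt12 (k₁ l₁ α : ℝ) (hk₁ : 2 * π ≤ k₁) (hl₁ : 2 * π ≤ l₁)
    (hα : 0 < α) (M : ℝ) (hM : M = max k₁ l₁) :
    ((1/10) * (α ^ 2 - 5 * α * M ^ 2 - 5 * M ^ 2)
      ≤ (1/8) * (α ^ 2 + 1) - (α ^ 2 + 1) / (8 * (1 + 4 * π ^ 2))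
        - α / (4 * (1 + 4 * π ^ 2)) - α / 2
        - ((α + 1) / 2) * (3/2 + k₁ * l₁ / 4)
        - k₁ ^ 2 * l₁ ^ 2 / (4 * (1 + l₁ ^ 2))
        - (α / 4) * (k₁ ^ 2 * l₁ ^ 2 / (1 + k₁ ^ 2)))
    ∧ (6 * M ^ 2 > (5/2) * M ^ 2 + Real.sqrt ((25/4) * M ^ 4 + 5 * M ^ 2))
    ∧ (α ≥ 6 * M ^ 2 →
        0 < α ^ 2 - 5 * α * M ^ 2 - 5 * M ^ 2
        ∧ 0 < (1/8) * (α ^ 2 + 1) - (α ^ 2 + 1) / (8 * (1 + 4 * π ^ 2))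
            - α / (4 * (1 + 4 * π ^ 2)) - α / 2
            - ((α + 1) / 2) * (3/2 + k₁ * l₁ / 4)
            - k₁ ^ 2 * l₁ ^ 2 / (4 * (1 + l₁ ^ 2))
            - (α / 4) * (k₁ ^ 2 * l₁ ^ 2 / (1 + k₁ ^ 2))) := by
  have hπ : 2 * π ≤ M := hM ▸ hk₁.trans (le_max_left _ _)
  have hM₁₁ : 11 ≤ M ^ 2 := by
    nlinarith [pow_le_pow_left₀ (by positivity) hπ 2, forty_le_one_add_four_mul_pi_sq]
  have hk : 0 ≤ k₁ := by linarith [pi_pos]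
  have hl : 0 ≤ l₁ := by linarith [pi_pos]
  have lower : (1/10) * (α ^ 2 - 5 * α * M ^ 2 - 5 * M ^ 2) ≤ curvatureEstimate k₁ l₁ α :=
    le_curvatureEstimate hα.le hk hl (hM ▸ le_max_left _ _) (hM ▸ le_max_right _ _) hM₁₁
  refine ⟨lower, ?_, fun hαM => ?_⟩
  · linarith [sqrt_lt_seven_halves_mul_sq (M := M) (by linarith)]
  · have hq := quadratic_pos_of_six_mul_sq_le (by linarith) hαM
    exact ⟨hq, lower.trans_lt' (by positivity)⟩
end
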